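/- Let m, n ≥ 3. The disjoint union of cycles C_m and C_n is the niche graph of some bipartite tournament with bipartition (V(C_m), V(C_n)) if and only if (m,n) ∈ {(3,3), (3,4), (4,3), (4,4)}. -/

import Mathlib

structure BipTournament (α : Type*) where
  U : Set α
  V : Set α
  A : α → α → Prop
  disj : Disjoint U V
  cover : U ∪ V = Set.univ
  orient : ∀ u ∈ U, ∀ v ∈ V, Xor' (A u v) (A v u)
  arcs : ∀ x y, A x y → (x ∈ U ∧ y ∈ V) ∨ (x ∈ V ∧ y ∈ U)

def BipTournament.outN {α : Type*} (D : BipTournament α) (x : α) : Set α := {y | D.A x y}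

def BipTournament.inN {α : Type*} (D : BipTournament α) (x : α) : Set α := {y | D.A y x}

def BipTournament.niche {α : Type*} (D : BipTournament α) : SimpleGraph α where
  Adj x y := x ≠ y ∧ ((∃ w, D.A x w ∧ D.A y w) ∨ (∃ w, D.A w x ∧ D.A w y))
  symm := by
    refine ⟨?_⟩
    rintro x y ⟨h, h'⟩
    exact ⟨h.symm, h'.imp (fun ⟨w, a, b⟩ => ⟨w, b, a⟩) (fun ⟨w, a, b⟩ => ⟨w, b, a⟩)⟩
  loopless := ⟨fun x h => h.1 rfl⟩


/-! Fix a vertex `w` of one part. Every vertex of the other part is an in- or an out-neighbour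
of `w`, and any two in-neighbours (out-neighbours) of `w` have `w` as a common out-neighbour
(in-neighbour), so the other part is covered by two cliques of the niche graph. A cycle of length
at least 5 is triangle-free and has more than 2 + 2 vertices, so it cannot be the niche graph on
that part. For lengths 3 and 4 explicit orientations work. -/

theorem Nat.add_one_mod_eq_iff {a b n : ℕ} (ha : a < n) (hb : b < n) :
    (a + 1) % n = b ↔ a + 1 = b ∨ (a + 1 = n ∧ b = 0) := by
  rcases Nat.succ_le_of_lt ha |>.lt_or_eq with h | rfl
  · rw [Nat.mod_eq_of_lt h]; omega
  · rw [Nat.mod_self]; omega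

namespace SimpleGraph

theorem CliqueFree.card_lt_of_isClique {α : Type*} {G : SimpleGraph α} {n : ℕ}
    (hG : G.CliqueFree n) {s : Finset α} (hs : G.IsClique (s : Set α)) : s.card < n := by
  by_contra! h
  obtain ⟨t, hts, rfl⟩ := Finset.exists_subset_card_eq h
  exact hG t ⟨hs.subset hts, rfl⟩

instance {V W : Type*} {G : SimpleGraph V} {H : SimpleGraph W}
    [DecidableRel G.Adj] [DecidableRel H.Adj] : DecidableRel (G ⊕g H).Adj
  | .inl _, .inl _ => decidable_of_iff' _ sum_adj_inl
  | .inr _, .inr _ => decidable_of_iff' _ sum_adj_inr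
  | .inl _, .inr _ => .isFalse (not_adj_sum_inl_inr _ _)
  | .inr _, .inl _ => .isFalse fun h => not_adj_sum_inl_inr _ _ h.symm

theorem cycleGraph_adj_iff_mod {n : ℕ} {a b : Fin n} :
    (cycleGraph n).Adj a b ↔ a ≠ b ∧ ((a.val + 1) % n = b.val ∨ (b.val + 1) % n = a.val) := by
  match n with
  | 0 => exact a.elim0
  | 1 => simp [Subsingleton.elim a b]
  | k + 2 =>
    rw [cycleGraph_adj, sub_eq_iff_eq_add', sub_eq_iff_eq_add', @eq_comm _ a, @eq_comm _ b]
    simp only [ne_eq, Fin.ext_iff, Fin.val_add, Fin.val_one,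
      Nat.add_one_mod_eq_iff a.isLt b.isLt, Nat.add_one_mod_eq_iff b.isLt a.isLt]
    omega

theorem cycleGraph_cliqueFree_three {n : ℕ} (hn : 4 ≤ n) : (cycleGraph n).CliqueFree 3 := by
  intro s hs
  obtain ⟨a, b, c, hab, hac, hbc, -⟩ := is3Clique_iff.mp hs
  simp only [cycleGraph_adj_iff_mod, ne_eq, Fin.ext_iff, Nat.add_one_mod_eq_iff a.isLt b.isLt,
    Nat.add_one_mod_eq_iff b.isLt a.isLt, Nat.add_one_mod_eq_iff a.isLt c.isLt,
    Nat.add_one_mod_eq_iff c.isLt a.isLt, Nat.add_one_mod_eq_iff c.isLt b.isLt,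
    Nat.add_one_mod_eq_iff b.isLt c.isLt] at hab hac hbc
  omega

end SimpleGraph

namespace BipTournament

open SimpleGraph

section Niche

variable {α : Type*} (D : BipTournament α)

theorem mem_inN_union_outN_comm {u v : α} :
    u ∈ D.inN v ∪ D.outN v ↔ v ∈ D.inN u ∪ D.outN u :=
  or_comm

theorem mem_inN_union_outN {u v : α} (hu : u ∈ D.U) (hv : v ∈ D.V) :
    u ∈ D.inN v ∪ D.outN v :=
  (D.orient u hu v hv).imp And.left And.left

theorem isClique_niche_inN (w : α) : D.niche.IsClique (D.inN w) :=
  fun _ hx _ hy hne => ⟨hne, .inl ⟨w, hx, hy⟩⟩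

theorem isClique_niche_outN (w : α) : D.niche.IsClique (D.outN w) :=
  fun _ hx _ hy hne => ⟨hne, .inr ⟨w, hx, hy⟩⟩

open Finset in
theorem card_le_four_of_cliqueFree_comap {ι : Type*} [Fintype ι] (w : α) (f : ι ↪ α)
    (hf : ∀ i, f i ∈ D.inN w ∪ D.outN w) (h3 : (D.niche.comap f).CliqueFree 3) :
    Fintype.card ι ≤ 4 := by
  classical
  have hcard (s : Set α) (hs : D.niche.IsClique s) : #(univ.filter fun i => f i ∈ s) < 3 :=
    h3.card_lt_of_isClique fun i hi j hj hij =>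
      hs (by simpa using hi) (by simpa using hj) (f.injective.ne hij)
  calc Fintype.card ι
      ≤ #((univ.filter fun i => f i ∈ D.inN w) ∪ univ.filter fun i => f i ∈ D.outN w) :=
        card_le_card fun i _ => by simpa using hf i
    _ ≤ #(univ.filter fun i => f i ∈ D.inN w) + #(univ.filter fun i => f i ∈ D.outN w) :=
        card_union_le _ _
    _ ≤ 2 + 2 := Nat.add_le_add (Nat.le_of_lt_succ (hcard _ (D.isClique_niche_inN w)))
        (Nat.le_of_lt_succ (hcard _ (D.isClique_niche_outN w)))

theorem le_four_of_comap_niche_eq_cycleGraph {k : ℕ} (w : α) (f : Fin k ↪ α)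
    (hf : ∀ i, f i ∈ D.inN w ∪ D.outN w) (hk : D.niche.comap f = cycleGraph k) : k ≤ 4 := by
  by_contra! h
  simpa [h.not_ge] using
    D.card_le_four_of_cliqueFree_comap w f hf (hk ▸ cycleGraph_cliqueFree_three h.le)

end Niche

section OfMatrix

variable {β γ : Type*}

def matrixArc (M : β → γ → Bool) : β ⊕ γ → β ⊕ γ → Bool :=
  Sum.elim (fun u => Sum.elim (fun _ => false) (M u))
    (fun v => Sum.elim (fun u => !M u v) fun _ => false)

def ofMatrix (M : β → γ → Bool) : BipTournament (β ⊕ γ) where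
  U := Set.range Sum.inl
  V := Set.range Sum.inr
  A x y := matrixArc M x y
  disj := Set.disjoint_range_iff.mpr fun _ _ => Sum.inl_ne_inr
  cover := Set.range_inl_union_range_inr
  orient := by
    rintro _ ⟨u, rfl⟩ _ ⟨v, rfl⟩
    cases h : M u v <;> simp only [matrixArc, h, Sum.elim_inl, Sum.elim_inr, Bool.not_false,
      Bool.not_true, Bool.false_eq_true]
    exacts [Or.inr ⟨trivial, id⟩, Or.inl ⟨trivial, id⟩]
  arcs := by
    rintro (u | v) (u' | v') h <;> simp [matrixArc] at h ⊢

instance [Fintype β] [Fintype γ] [DecidableEq β] [DecidableEq γ] (M : β → γ → Bool) :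
    DecidableRel (ofMatrix M).niche.Adj := fun x y =>
  inferInstanceAs <| Decidable <| x ≠ y ∧
    ((∃ w, matrixArc M x w ∧ matrixArc M y w) ∨ ∃ w, matrixArc M w x ∧ matrixArc M w y)

end OfMatrix

theorem exists_niche_ofMatrix_eq_cycleGraph_sum {m n : ℕ} (hm : m = 3 ∨ m = 4)
    (hn : n = 3 ∨ n = 4) :
    ∃ M : Fin m → Fin n → Bool, (ofMatrix M).niche = cycleGraph m ⊕g cycleGraph n := by
  rcases hm with rfl | rfl <;> rcases hn with rfl | rfl
  on_goal 1 => refine ⟨fun _ _ => false, ?_⟩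
  on_goal 2 => refine ⟨![![false, false, true, true], ![false, false, true, true],
    ![false, true, true, false]], ?_⟩
  on_goal 3 => refine ⟨![![false, false, false], ![false, false, true], ![true, true, true],
    ![true, true, false]], ?_⟩
  on_goal 4 => refine ⟨![![false, false, true, true], ![false, true, true, false],
    ![true, true, false, false], ![true, false, false, true]], ?_⟩
  all_goals ext x y; revert x y; decide

end BipTournament

theorem stmt17 (m n : ℕ) (hm : 3 ≤ m) (hn : 3 ≤ n) :
    (∃ D : BipTournament (Fin m ⊕ Fin n),
      D.U = Set.range Sum.inl ∧ D.V = Set.range Sum.inr ∧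
      D.niche = SimpleGraph.fromRel (fun x y =>
        match x, y with
        | Sum.inl a, Sum.inl b => (a.val + 1) % m = b.val
        | Sum.inr a, Sum.inr b => (a.val + 1) % n = b.val
        | _, _ => False)) ↔ ((m = 3 ∨ m = 4) ∧ (n = 3 ∨ n = 4)) := by
  constructor
  · rintro ⟨D, hU, hV, hG⟩
    have hUV (i : Fin m) (j : Fin n) : Sum.inl i ∈ D.inN (Sum.inr j) ∪ D.outN (Sum.inr j) :=
      D.mem_inN_union_outN (hU ▸ ⟨i, rfl⟩) (hV ▸ ⟨j, rfl⟩)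
    have hm4 := D.le_four_of_comap_niche_eq_cycleGraph (Sum.inr ⟨0, by omega⟩) .inl
      (fun i => hUV i _) (by ext; simp [hG, SimpleGraph.cycleGraph_adj_iff_mod])
    have hn4 := D.le_four_of_comap_niche_eq_cycleGraph (Sum.inl ⟨0, by omega⟩) .inr
      (fun j => D.mem_inN_union_outN_comm.mp (hUV _ j))
      (by ext; simp [hG, SimpleGraph.cycleGraph_adj_iff_mod])
    omega
  · rintro ⟨hm, hn⟩
    obtain ⟨M, hM⟩ := BipTournament.exists_niche_ofMatrix_eq_cycleGraph_sum hm hn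
    refine ⟨.ofMatrix M, rfl, rfl, hM.trans ?_⟩
    ext (a | a) (b | b) <;> simp [SimpleGraph.cycleGraph_adj_iff_mod]
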